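/- (Optimal Path Extension, Theorem 1.) Let L = P ++ M be a duplicate-free list enumerating all variables, let U be the set of elements of the prefix P, and let x be a variable occurring in M. If U is a superset of an optimal parents set of x, i.e. d(x, U) = d(x, univ \ {x}), then the list P ++ [x] ++ (M with x erased), obtained by moving x to immediately after the prefix P, is a duplicate-free enumeration of all variables and satisfies Q(P ++ [x] ++ (M.erase x)) ≤ Q(L). Hence any optimal path from the lattice node U to the sink may be taken to pass through the node U ∪ {x}. -/

import Mathlib

/-- `d s x U` : the score of selecting optimal parents of `x` from `U`,
defined as the minimum of `s x W` over all subsets `W ⊆ U`. -/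
noncomputable def d {X : Type*} [DecidableEq X] (s : X → Finset X → ℝ)
    (x : X) (U : Finset X) : ℝ :=
  U.powerset.inf' (Finset.powerset_nonempty U) (s x)

/-- `Qfrom s M U` : the cost of extending the lattice node `U` along the
ordering `M`, i.e. `Σ_k d(M_k, U ∪ S_k)` where `S_k` is the set of entries
of `M` preceding position `k`. -/
noncomputable def Qfrom {X : Type*} [DecidableEq X] (s : X → Finset X → ℝ) :
    List X → Finset X → ℝ
  | [], _ => 0
  | x :: M, U => d s x U + Qfrom s M (insert x U)

/-- `Q s L` : the cost of the ordering `L`, i.e. `Σ_k d(L_k, S_k)` where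
`S_k` is the set of entries of `L` preceding position `k`; this is the score
of the network in which each variable's parents are chosen optimally from
its predecessors in `L`. -/
noncomputable def Q {X : Type*} [DecidableEq X] (s : X → Finset X → ℝ)
    (L : List X) : ℝ :=
  Qfrom s L ∅

/-!
Moving `x` forward to sit right after `P` changes only the costs of `x` and of the entries of `M`
before it. The cost of `x` becomes `d(x, U)`, which is already the least value `d(x, ·)` takes on
any set avoiding `x`, so it can only drop; every other variable merely gains `x` as an extra
candidate parent, and `d` is antitone in the candidate set.
-/

open Finset

section OrderingCost

variable {X : Type*} [DecidableEq X] (s : X → Finset X → ℝ)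

theorem d_antitone (x : X) : Antitone (d s x) := fun _ _ hUV =>
  le_inf' _ _ fun _ hW => inf'_le _ (mem_powerset.2 ((mem_powerset.1 hW).trans hUV))

theorem Qfrom_append (A B : List X) (U : Finset X) :
    Qfrom s (A ++ B) U = Qfrom s A U + Qfrom s B (U ∪ A.toFinset) := by
  induction A generalizing U with
  | nil => simp [Qfrom]
  | cons a A ih =>
    simp only [List.cons_append, Qfrom, ih, insert_union, List.toFinset_cons, union_insert,
      add_assoc]

theorem Q_append (A B : List X) : Q s (A ++ B) = Q s A + Qfrom s B A.toFinset := by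
  simp [Q, Qfrom_append]

section Fintype

variable [Fintype X]

theorem d_eq_of_subset_of_notMem {x : X} {U V : Finset X} (hUV : U ⊆ V) (hxV : x ∉ V)
    (hopt : d s x U = d s x (univ \ {x})) : d s x V = d s x (univ \ {x}) :=
  le_antisymm (hopt ▸ d_antitone s x hUV) (d_antitone s x fun _ hz => by grind)

theorem Qfrom_cons_erase_le {x : X} {M : List X} {U : Finset X} (hxM : x ∈ M) (hxU : x ∉ U)
    (hopt : d s x U = d s x (univ \ {x})) : Qfrom s (x :: M.erase x) U ≤ Qfrom s M U := by
  induction M generalizing U with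
  | nil => cases hxM
  | cons y M ih =>
    obtain rfl | hxy := eq_or_ne x y
    · simp
    have hxM' : x ∈ M := List.mem_of_ne_of_mem hxy hxM
    have hxyU : x ∉ insert y U := by simp [hxy, hxU]
    have hopt' := d_eq_of_subset_of_notMem s (subset_insert y U) hxyU hopt
    have hy : d s y (insert x U) ≤ d s y U := d_antitone s y (subset_insert x U)
    have ih' := ih hxM' hxyU hopt'
    rw [List.erase_cons_tail (by simpa using hxy.symm)]
    simp only [Qfrom] at ih' ⊢
    rw [insert_comm] at ih'
    -- `x` costs the same at `U` as at `insert y U`, and `y` only gains `x` as a candidate parent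
    linarith

end Fintype

end OrderingCost

theorem optimal_path_extension_general
    {X : Type*} [Fintype X] [DecidableEq X]
    (s : X → Finset X → ℝ) (P M : List X) (x : X)
    (hnodup : (P ++ M).Nodup)
    (henum : ∀ z : X, z ∈ P ++ M)
    (hxM : x ∈ M)
    (hx : x ∉ P.toFinset)
    (hopt : d s x P.toFinset = d s x (Finset.univ \ {x})) :
    (P ++ [x] ++ M.erase x).Nodup ∧
    (∀ z : X, z ∈ P ++ [x] ++ M.erase x) ∧
    Q s (P ++ [x] ++ M.erase x) ≤ Q s (P ++ M) := by
  have hperm : (P ++ [x] ++ M.erase x).Perm (P ++ M) := by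
    simpa using (List.perm_cons_erase hxM).symm.append_left P
  refine ⟨hperm.nodup_iff.2 hnodup, fun z => hperm.mem_iff.2 (henum z), ?_⟩
  rw [List.append_assoc, List.singleton_append, Q_append, Q_append]
  exact (add_le_add_iff_left _).2 (Qfrom_cons_erase_le s hxM hx hopt)

/-- Optimal path extension (Theorem 1): if `P ++ M` is a duplicate-free
enumeration of all variables, `x` occurs in `M`, and the prefix set
`U = P.toFinset` is a superset of an optimal parents set of `x`, then moving
`x` to immediately after `P` yields a duplicate-free enumeration of all
variables whose score is no worse. -/
theorem optimal_path_extension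
    {X : Type*} [Fintype X] [DecidableEq X] [Nonempty X]
    (s : X → Finset X → ℝ) (P M : List X) (x : X)
    (hnodup : (P ++ M).Nodup)
    (henum : ∀ z : X, z ∈ P ++ M)
    (hxM : x ∈ M)
    (hx : x ∉ P.toFinset)
    (hopt : d s x P.toFinset = d s x (Finset.univ \ {x})) :
    (P ++ [x] ++ M.erase x).Nodup ∧
    (∀ z : X, z ∈ P ++ [x] ++ M.erase x) ∧
    Q s (P ++ [x] ++ M.erase x) ≤ Q s (P ++ M) :=
  optimal_path_extension_general s P M x hnodup henum hxM hx hopt
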